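/- Let G be a random matrix in ℝ^{m×n} with E[G] = ∇L and finite second moments, let ∇L = UΣVᵀ be a reduced SVD of ∇L, and assume E[Gᵀ G] is invertible. Then the function B ↦ E[‖G B − U Vᵀ‖_F^2] over B ∈ ℝ^{n×n} attains its unique minimum at B = E[Gᵀ G]^{−1} · (∇Lᵀ ∇L)^{1/2}. -/

import Mathlib

open MeasureTheory Matrix

/-- The positive semidefinite square root of a positive semidefinite matrix
(restored: this definition was removed from Mathlib; body as in Mathlib of December 2024). -/
noncomputable def Matrix.PosSemidef.sqrt {n 𝕜 : Type*} [Fintype n] [DecidableEq n] [RCLike 𝕜]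
    [PartialOrder 𝕜]    {A : Matrix n n 𝕜} (hA : A.PosSemidef) : Matrix n n 𝕜 :=
  (hA.1.eigenvectorUnitary : Matrix n n 𝕜) * diagonal ((↑) ∘ (Real.sqrt ·) ∘ hA.1.eigenvalues) *
    (star hA.1.eigenvectorUnitary : Matrix n n 𝕜)

section Aux

lemma expand_entry_aux {m n : ℕ} (A : Matrix (Fin m) (Fin n) ℝ) (B : Matrix (Fin n) (Fin n) ℝ)
    (P : Matrix (Fin m) (Fin n) ℝ) (i : Fin m) (j : Fin n) :
    ((A * B - P) i j)^2
      = (∑ l, ∑ l', (A i l * A i l') * (B l j * B l' j))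
        - 2 * P i j * (∑ l, A i l * B l j) + (P i j)^2 := by
  have h1 : (A * B - P) i j = (∑ l, A i l * B l j) - P i j := by
    simp [Matrix.mul_apply, Matrix.sub_apply]
  have h2 : (∑ l, A i l * B l j)^2 = ∑ l, ∑ l', (A i l * A i l') * (B l j * B l' j) := by
    rw [sq, Finset.sum_mul_sum]
    exact Finset.sum_congr rfl fun l _ => Finset.sum_congr rfl fun l' _ => by ring
  rw [h1, sub_sq, h2]; ring

variable {Ω : Type*} [MeasurableSpace Ω] (μ : Measure Ω) [IsProbabilityMeasure μ]
    {m n : ℕ} (G : Ω → Matrix (Fin m) (Fin n) ℝ)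
    (gradL P : Matrix (Fin m) (Fin n) ℝ)
    (M : Matrix (Fin n) (Fin n) ℝ)
    (hg1 : ∀ i j, Integrable (fun ω => G ω i j) μ)
    (hg2 : ∀ i j i' j', Integrable (fun ω => G ω i j * G ω i' j') μ)
    (hmean : ∀ i j, ∫ ω, G ω i j ∂μ = gradL i j)
    (hM : ∀ l l', M l l' = ∑ i, ∫ ω, G ω i l * G ω i l' ∂μ)
    (B : Matrix (Fin n) (Fin n) ℝ)

include hg1 hg2 in
lemma integrable_entry_aux (i : Fin m) (j : Fin n) :
    Integrable (fun ω => ((G ω * B - P) i j)^2) μ := by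
  have h : (fun ω => ((G ω * B - P) i j)^2)
      = fun ω => (∑ l, ∑ l', (G ω i l * G ω i l') * (B l j * B l' j))
        - 2 * P i j * (∑ l, G ω i l * B l j) + (P i j)^2 :=
    funext fun ω => expand_entry_aux (G ω) B P i j
  rw [h]
  refine Integrable.add (Integrable.sub ?_ ?_) (integrable_const _)
  · exact integrable_finset_sum _ fun l _ => integrable_finset_sum _ fun l' _ =>
      (hg2 i l i l').mul_const _
  · exact (integrable_finset_sum _ fun l _ => (hg1 i l).mul_const _).const_mul _

include hg1 hg2 hmean in
lemma entry_integral_aux (i : Fin m) (j : Fin n) :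
    ∫ ω, ((G ω * B - P) i j)^2 ∂μ
      = (∑ l, ∑ l', (∫ ω, G ω i l * G ω i l' ∂μ) * (B l j * B l' j))
        - 2 * P i j * (∑ l, gradL i l * B l j) + (P i j)^2 := by
  have h : (fun ω => ((G ω * B - P) i j)^2)
      = fun ω => (∑ l, ∑ l', (G ω i l * G ω i l') * (B l j * B l' j))
        - 2 * P i j * (∑ l, G ω i l * B l j) + (P i j)^2 :=
    funext fun ω => expand_entry_aux (G ω) B P i j
  have i1 : Integrable (fun ω => ∑ l, ∑ l', (G ω i l * G ω i l') * (B l j * B l' j)) μ :=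
    integrable_finset_sum _ fun l _ => integrable_finset_sum _ fun l' _ =>
      (hg2 i l i l').mul_const _
  have i2 : Integrable (fun ω => 2 * P i j * (∑ l, G ω i l * B l j)) μ :=
    (integrable_finset_sum _ fun l _ => (hg1 i l).mul_const _).const_mul _
  have i12 : Integrable (fun ω => (∑ l, ∑ l', (G ω i l * G ω i l') * (B l j * B l' j))
      - 2 * P i j * (∑ l, G ω i l * B l j)) μ := i1.sub i2
  rw [h, integral_add i12 (integrable_const _), integral_sub i1 i2,
    integral_finset_sum _ fun l _ => integrable_finset_sum _ fun l' _ => (hg2 i l i l').mul_const _,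
    integral_const, probReal_univ, one_smul, integral_const_mul,
    integral_finset_sum _ fun l _ => (hg1 i l).mul_const _]
  congr 2
  · exact Finset.sum_congr rfl fun l _ => by
      rw [integral_finset_sum _ fun l' _ => (hg2 i l i l').mul_const _]
      exact Finset.sum_congr rfl fun l' _ => integral_mul_const _ _
  · exact congrArg _ <| Finset.sum_congr rfl fun l _ => by
      rw [integral_mul_const, hmean]

include hg1 hg2 hmean hM in
lemma total_integral_aux :
    ∫ ω, ∑ i, ∑ j, ((G ω * B - P) i j)^2 ∂μ
      = Matrix.trace (Bᵀ * M * B) - 2 * Matrix.trace (Bᵀ * (gradLᵀ * P))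
        + ∑ i, ∑ j, (P i j)^2 := by
  have step : ∫ ω, ∑ i, ∑ j, ((G ω * B - P) i j)^2 ∂μ
      = ∑ i, ∑ j, ∫ ω, ((G ω * B - P) i j)^2 ∂μ := by
    rw [integral_finset_sum _ fun i _ =>
      integrable_finset_sum _ fun j _ => integrable_entry_aux μ G P hg1 hg2 B i j]
    exact Finset.sum_congr rfl fun i _ =>
      integral_finset_sum _ fun j _ => integrable_entry_aux μ G P hg1 hg2 B i j
  rw [step]
  simp only [entry_integral_aux μ G gradL P hg1 hg2 hmean B]
  simp only [Finset.sum_add_distrib, Finset.sum_sub_distrib]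
  congr 2
  · have tr1 : Matrix.trace (Bᵀ * M * B)
        = ∑ j, ∑ l, ∑ l', M l l' * (B l j * B l' j) := by
      simp only [Matrix.trace, Matrix.diag, Matrix.mul_apply, Matrix.transpose_apply,
        Finset.sum_mul]
      exact Finset.sum_congr rfl fun j _ => by
        rw [Finset.sum_comm]
        exact Finset.sum_congr rfl fun l _ => Finset.sum_congr rfl fun l' _ => by ring
    rw [tr1]
    rw [Finset.sum_comm]
    refine Finset.sum_congr rfl fun j _ => ?_
    rw [Finset.sum_comm]
    refine Finset.sum_congr rfl fun l _ => ?_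
    rw [Finset.sum_comm]
    refine Finset.sum_congr rfl fun l' _ => ?_
    rw [hM, Finset.sum_mul]
  · have tr2 : Matrix.trace (Bᵀ * (gradLᵀ * P))
        = ∑ j, ∑ l, ∑ i, B l j * (gradL i l * P i j) := by
      simp only [Matrix.trace, Matrix.diag, Matrix.mul_apply, Matrix.transpose_apply,
        Finset.mul_sum]
    rw [tr2, Finset.mul_sum]
    rw [Finset.sum_comm]
    refine Finset.sum_congr rfl fun j _ => ?_
    simp only [Finset.mul_sum]
    rw [Finset.sum_comm]
    exact Finset.sum_congr rfl fun l _ => Finset.sum_congr rfl fun i _ => by ring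

include hg2 hM in
lemma M_psd_aux : M.PosSemidef := by
  refine Matrix.PosSemidef.of_dotProduct_mulVec_nonneg ?_ ?_
  · ext l l'
    simp only [Matrix.conjTranspose_apply, star_trivial, hM]
    exact Finset.sum_congr rfl fun i _ =>
      integral_congr_ae (Filter.Eventually.of_forall fun ω => mul_comm _ _)
  · intro x
    have hquad : star x ⬝ᵥ M *ᵥ x = ∑ i, ∫ ω, (∑ l, G ω i l * x l)^2 ∂μ := by
      have sq_int : ∀ i : Fin m, ∫ ω, (∑ l, G ω i l * x l)^2 ∂μ
          = ∑ l, ∑ l', (∫ ω, G ω i l * G ω i l' ∂μ) * (x l * x l') := by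
        intro i
        have hexp : ∀ ω : Ω, (∑ l, G ω i l * x l)^2
            = ∑ l, ∑ l', (G ω i l * G ω i l') * (x l * x l') := by
          intro ω
          rw [sq, Finset.sum_mul_sum]
          exact Finset.sum_congr rfl fun l _ => Finset.sum_congr rfl fun l' _ => by ring
        simp_rw [hexp]
        rw [integral_finset_sum _ fun l _ =>
          integrable_finset_sum _ fun l' _ => (hg2 i l i l').mul_const _]
        refine Finset.sum_congr rfl fun l _ => ?_
        rw [integral_finset_sum _ fun l' _ => (hg2 i l i l').mul_const _]
        exact Finset.sum_congr rfl fun l' _ => integral_mul_const _ _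
      have hd : star x ⬝ᵥ M *ᵥ x = ∑ l, ∑ l', M l l' * (x l * x l') := by
        simp only [dotProduct, Matrix.mulVec, star_trivial, Finset.mul_sum]
        exact Finset.sum_congr rfl fun l _ => Finset.sum_congr rfl fun l' _ => by ring
      rw [hd]
      simp_rw [hM, Finset.sum_mul, sq_int]
      calc ∑ l, ∑ l', ∑ i, (∫ ω, G ω i l * G ω i l' ∂μ) * (x l * x l')
          = ∑ l, ∑ i, ∑ l', (∫ ω, G ω i l * G ω i l' ∂μ) * (x l * x l') :=
            Finset.sum_congr rfl fun l _ => Finset.sum_comm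
        _ = ∑ i, ∑ l, ∑ l', (∫ ω, G ω i l * G ω i l' ∂μ) * (x l * x l') :=
            Finset.sum_comm
    rw [hquad]
    exact Finset.sum_nonneg fun i _ => integral_nonneg fun ω => sq_nonneg _

end Aux

lemma trace_quad_diff_aux {n : ℕ} (M C B Bs : Matrix (Fin n) (Fin n) ℝ)
    (hsym : Mᵀ = M) (hMBs : M * Bs = C) :
    (Matrix.trace (Bᵀ*M*B) - 2*Matrix.trace (Bᵀ*C))
      - (Matrix.trace (Bsᵀ*M*Bs) - 2*Matrix.trace (Bsᵀ*C))
      = Matrix.trace ((B-Bs)ᵀ * M * (B-Bs)) := by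
  have h1 : Matrix.trace (Bsᵀ * M * B) = Matrix.trace (Bᵀ * M * Bs) := by
    rw [← Matrix.trace_transpose (Bsᵀ * M * B)]
    simp only [Matrix.transpose_mul, Matrix.transpose_transpose, hsym, Matrix.mul_assoc]
  simp only [Matrix.transpose_sub, Matrix.sub_mul, Matrix.mul_sub, Matrix.trace_sub,
    ← hMBs, ← Matrix.mul_assoc]
  linarith

lemma trace_quad_cols_aux {n : ℕ} (M D : Matrix (Fin n) (Fin n) ℝ) :
    Matrix.trace (Dᵀ * M * D) = ∑ j, (fun l => D l j) ⬝ᵥ (M *ᵥ (fun l => D l j)) := by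
  simp only [Matrix.trace, Matrix.diag_apply, Matrix.mul_apply, Matrix.transpose_apply,
    dotProduct, Matrix.mulVec, Finset.sum_mul]
  refine Finset.sum_congr rfl fun j _ => ?_
  rw [Finset.sum_comm]
  refine Finset.sum_congr rfl fun l _ => ?_
  rw [Finset.mul_sum]
  exact Finset.sum_congr rfl fun l' _ => by ring

open scoped MatrixOrder in
lemma sqrt_eq_cfc_aux {n : ℕ} {A : Matrix (Fin n) (Fin n) ℝ} (hA : A.PosSemidef) :
    hA.sqrt = CFC.sqrt A := by
  rw [CFC.sqrt_eq_real_sqrt A hA.nonneg, cfcₙ_eq_cfc, hA.1.cfc_eq]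
  simp only [Matrix.IsHermitian.cfc, Unitary.conjStarAlgAut_apply, Matrix.PosSemidef.sqrt]

open scoped MatrixOrder in
lemma eq_sqrt_aux {n : ℕ} {A B : Matrix (Fin n) (Fin n) ℝ} (hB : B.PosSemidef)
    (hA : A.PosSemidef) (h : B ^ 2 = A) : B = hA.sqrt := by
  rw [sqrt_eq_cfc_aux]
  exact (CFC.sqrt_unique (by rw [← sq]; exact h) hB.nonneg).symm

lemma sqrt_is_W_aux {m n k : ℕ} (gradL : Matrix (Fin m) (Fin n) ℝ)
    (U : Matrix (Fin m) (Fin k) ℝ) (S : Matrix (Fin k) (Fin k) ℝ)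
    (V : Matrix (Fin n) (Fin k) ℝ)
    (hU : Uᵀ * U = 1) (hV : Vᵀ * V = 1)
    (hSdiag : ∀ i j, i ≠ j → S i j = 0) (hSpos : ∀ i, 0 < S i i)
    (hSVD : gradL = U * S * Vᵀ)
    (hQ : (gradLᵀ * gradL).PosSemidef) :
    hQ.sqrt = gradLᵀ * (U * Vᵀ) := by
  have hSdiagonal : S = Matrix.diagonal (fun i => S i i) := by
    ext i j
    by_cases h : i = j
    · subst h; simp
    · simp [Matrix.diagonal_apply_ne _ h, hSdiag i j h]
  have hSpsd : S.PosSemidef := by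
    rw [hSdiagonal]; exact Matrix.PosSemidef.diagonal (fun i => (hSpos i).le)
  have hST : Sᵀ = S := by
    rw [hSdiagonal, Matrix.diagonal_transpose]
  have hVH : Vᴴ = Vᵀ := Matrix.conjTranspose_eq_transpose_of_trivial V
  have hWpsd : (V * S * Vᵀ).PosSemidef := by
    have := hSpsd.mul_mul_conjTranspose_same V
    rwa [hVH] at this
  have hgT : gradLᵀ = V * S * Uᵀ := by
    rw [hSVD]
    simp only [Matrix.transpose_mul, Matrix.transpose_transpose, hST, Matrix.mul_assoc]
  have hW2 : (V * S * Vᵀ) ^ 2 = gradLᵀ * gradL := by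
    rw [pow_two, hgT, hSVD]
    simp only [Matrix.mul_assoc]
    rw [← Matrix.mul_assoc Vᵀ V, hV, Matrix.one_mul, ← Matrix.mul_assoc Uᵀ U, hU,
      Matrix.one_mul]
  have hC : gradLᵀ * (U * Vᵀ) = V * S * Vᵀ := by
    rw [hgT]
    simp only [Matrix.mul_assoc]
    rw [← Matrix.mul_assoc Uᵀ U, hU, Matrix.one_mul]
  rw [hC]
  exact (eq_sqrt_aux hWpsd hQ hW2).symm

/-- **Optimal right adaptation matrix towards the polar factor (one-sided, `A = I`).**
Let `G` be a random `m × n` matrix with `E[G] = ∇L` and finite second moments, let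
`∇L = U Σ Vᵀ` be a reduced SVD of `∇L`, and assume `E[Gᵀ G]` is invertible.  Then
`B ↦ E[‖G B − U Vᵀ‖_F²]` attains its unique minimum at
`B = E[Gᵀ G]⁻¹ · (∇Lᵀ ∇L)^{1/2}`. -/
theorem statement4 {Ω : Type*} [MeasurableSpace Ω] (μ : Measure Ω) [IsProbabilityMeasure μ]
    {m n k : ℕ} (G : Ω → Matrix (Fin m) (Fin n) ℝ)
    (gradL : Matrix (Fin m) (Fin n) ℝ)
    (hg1 : ∀ i j, Integrable (fun ω => G ω i j) μ)
    (hg2 : ∀ i j i' j', Integrable (fun ω => G ω i j * G ω i' j') μ)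
    (hmean : ∀ i j, ∫ ω, G ω i j ∂μ = gradL i j)
    (U : Matrix (Fin m) (Fin k) ℝ) (S : Matrix (Fin k) (Fin k) ℝ)
    (V : Matrix (Fin n) (Fin k) ℝ)
    (hU : Uᵀ * U = 1) (hV : Vᵀ * V = 1)
    (hSdiag : ∀ i j, i ≠ j → S i j = 0) (hSpos : ∀ i, 0 < S i i)
    (hSVD : gradL = U * S * Vᵀ)
    (EGTG : Matrix (Fin n) (Fin n) ℝ)
    (hEGTG : ∀ j j', EGTG j j' = ∫ ω, ((G ω)ᵀ * G ω) j j' ∂μ)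
    (hinv : IsUnit EGTG.det)
    (hQ : (gradLᵀ * gradL).PosSemidef)
    (Bstar : Matrix (Fin n) (Fin n) ℝ)
    (hBstar : Bstar = EGTG⁻¹ * hQ.sqrt) :
    (∀ B : Matrix (Fin n) (Fin n) ℝ,
        ∫ ω, ∑ i, ∑ j, ((G ω * Bstar - U * Vᵀ) i j) ^ 2 ∂μ ≤
          ∫ ω, ∑ i, ∑ j, ((G ω * B - U * Vᵀ) i j) ^ 2 ∂μ) ∧
    (∀ B : Matrix (Fin n) (Fin n) ℝ, B ≠ Bstar →
        ∫ ω, ∑ i, ∑ j, ((G ω * Bstar - U * Vᵀ) i j) ^ 2 ∂μ <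
          ∫ ω, ∑ i, ∑ j, ((G ω * B - U * Vᵀ) i j) ^ 2 ∂μ) := by
  have hMdef : ∀ l l', EGTG l l' = ∑ i, ∫ ω, G ω i l * G ω i l' ∂μ := by
    intro l l'
    rw [hEGTG]
    have h : ∀ ω : Ω, ((G ω)ᵀ * G ω) l l' = ∑ i, G ω i l * G ω i l' := fun ω => by
      simp [Matrix.mul_apply, Matrix.transpose_apply]
    simp_rw [h]
    exact integral_finset_sum _ fun i _ => hg2 i l i l'
  have hpsd : EGTG.PosSemidef := M_psd_aux μ G EGTG hg2 hMdef
  have hsym : EGTGᵀ = EGTG := by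
    rw [← Matrix.conjTranspose_eq_transpose_of_trivial]
    exact hpsd.1
  have hsqrt : hQ.sqrt = gradLᵀ * (U * Vᵀ) :=
    sqrt_is_W_aux gradL U S V hU hV hSdiag hSpos hSVD hQ
  have hMBs : EGTG * Bstar = gradLᵀ * (U * Vᵀ) := by
    rw [hBstar, Matrix.mul_nonsing_inv_cancel_left _ _ hinv, hsqrt]
  have key : ∀ B : Matrix (Fin n) (Fin n) ℝ,
      ∫ ω, ∑ i, ∑ j, ((G ω * B - U * Vᵀ) i j) ^ 2 ∂μ
        = ∫ ω, ∑ i, ∑ j, ((G ω * Bstar - U * Vᵀ) i j) ^ 2 ∂μ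
          + Matrix.trace ((B - Bstar)ᵀ * EGTG * (B - Bstar)) := by
    intro B
    rw [total_integral_aux μ G gradL (U * Vᵀ) EGTG hg1 hg2 hmean hMdef B,
      total_integral_aux μ G gradL (U * Vᵀ) EGTG hg1 hg2 hmean hMdef Bstar,
      ← trace_quad_diff_aux EGTG (gradLᵀ * (U * Vᵀ)) B Bstar hsym hMBs]
    ring
  have hnn : ∀ D : Matrix (Fin n) (Fin n) ℝ, 0 ≤ Matrix.trace (Dᵀ * EGTG * D) := by
    intro D
    rw [trace_quad_cols_aux]
    exact Finset.sum_nonneg fun j _ => by simpa using hpsd.dotProduct_mulVec_nonneg (fun l => D l j)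
  constructor
  · intro B
    have := hnn (B - Bstar)
    rw [key B]
    linarith
  · intro B hB
    rw [key B]
    have hD : B - Bstar ≠ 0 := sub_ne_zero_of_ne hB
    obtain ⟨l0, j0, hlj⟩ : ∃ l j, (B - Bstar) l j ≠ 0 := by
      by_contra h
      push_neg at h
      exact hD (by ext l j; exact h l j)
    have hxne : (fun l => (B - Bstar) l j0) ≠ 0 := fun h => hlj (congrFun h l0)
    have hpos : 0 < Matrix.trace ((B - Bstar)ᵀ * EGTG * (B - Bstar)) := by
      rw [trace_quad_cols_aux]
      refine Finset.sum_pos' (fun j _ => by simpa using hpsd.dotProduct_mulVec_nonneg (fun l => (B - Bstar) l j))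
        ⟨j0, Finset.mem_univ _, ?_⟩
      rcases lt_or_eq_of_le (by simpa using hpsd.dotProduct_mulVec_nonneg (fun l => (B - Bstar) l j0)) with h | h
      · exact h
      · exfalso
        have h0 : star (fun l => (B - Bstar) l j0) ⬝ᵥ EGTG *ᵥ (fun l => (B - Bstar) l j0) = 0 := by
          simpa using h.symm
        have hMx : EGTG *ᵥ (fun l => (B - Bstar) l j0) = 0 :=
          (hpsd.dotProduct_mulVec_zero_iff _).mp h0
        have hx0 : (fun l => (B - Bstar) l j0) = 0 := by
          have := congrArg (fun v => EGTG⁻¹ *ᵥ v) hMx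
          simpa [Matrix.mulVec_mulVec, Matrix.nonsing_inv_mul _ hinv] using this
        exact hxne hx0
    linarith
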